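/- Let G be an infinite (g,o)-growing graph with g ≥ 1 and maximal degree Δ < ∞, set δ = 1 + log(Δ+1) and β′ = 2gβ − δ. There exist β₀ > 0 and c > 0, depending only on Δ and g, such that for every β ≥ β₀, every i ∈ {0,…,m}, every x ∈ L_i, and every τ ∈ Ω⁺: letting τ^{x,+} and τ^{x,−} be τ with spin +1, respectively −1, at x, one has μ_{F_{i+1}}^{τ^{x,+}}(σ)/μ_{F_{i+1}}^{τ^{x,−}}(σ) ≤ 1 + c e^{−β′} for every configuration σ of the spins on F_{i+1}. -/

import Mathlib

/-!
Flipping the spin at `x` from `+` to `-` multiplies the weight of a configuration `σ` by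
`exp (-2β Σ_{v ~ x} σ_v)`. Comparing this factor at the fixed configuration with the one at a
summation variable bounds the ratio of the two cylinder probabilities by the `τ^{x,+}`-expectation
of `exp (4β M)`, where `M` counts the minus neighbours of `x` in `F_{i+1}`.

That expectation is controlled by a Peierls argument. When `M ≠ 0`, flip the minus cluster `C`
of `x` inside `F_{i+1}`. In a growing graph every vertex has at least `g` more upward than
downward edges, and every upward edge leaving `C` ends at a plus spin (by maximality of `C`, or
by the plus boundary at level `m + 1`), so the energy rises by at least `2g|C|`, plus `4M` from
the edges between `C` and the plus spin at `x`. The map `σ ↦ (flip σ, C)` is injective, and at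
most `Δ^(2k)` clusters of size `k` hang from `x`, since each of them, together with `x`, is the
vertex set of a closed walk of length `2k` at `x`. Hence the expectation is at most
`1 + Σ_{k ≥ 1} (Δ² e^{-2gβ})^k ≤ 1 + 2Δ² e^{-2gβ}`.
-/

open Finset
open scoped Classical

noncomputable section

namespace IsingGlauber

/-- The real spin value of a Boolean spin: `true ↦ +1`, `false ↦ -1`. -/
def spin (b : Bool) : ℝ := if b then 1 else -1

variable {V : Type*}

/-- Neighbourhood finset of a vertex, from an explicit local finiteness witness. -/
def nbr (G : SimpleGraph V) (hlf : G.LocallyFinite) (x : V) : Finset V :=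
  @SimpleGraph.neighborFinset V G x (hlf x)

/-- `G` is `(g,o)`-growing: every vertex `x` (say at distance `r` from `o`) has at
    least `g` more neighbours in level `r+1` than in the ball of radius `r`. -/
def IsGrowing (G : SimpleGraph V) (hlf : G.LocallyFinite) (g : ℕ) (o : V) : Prop :=
  ∀ x : V,
    ((nbr G hlf x).filter fun z => G.dist o z ≤ G.dist o x).card + g ≤
      ((nbr G hlf x).filter fun z => G.dist o z = G.dist o x + 1).card

variable [DecidableEq V]

/-- External vertex boundary of a finite vertex set. -/
def vbd (G : SimpleGraph V) (hlf : G.LocallyFinite) (A : Finset V) : Finset V :=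
  A.biUnion (fun a => nbr G hlf a) \ A

/-- Closure `A ∪ ∂_V A` of a finite vertex set. -/
def cl (G : SimpleGraph V) (hlf : G.LocallyFinite) (A : Finset V) : Finset V :=
  A ∪ vbd G hlf A

/-- Ising Hamiltonian (zero field) with boundary: `Σ_{(x,y) ∈ E(A ∪ ∂_V A)} σ_x σ_y`,
    the sum over edges with both endpoints in `A ∪ ∂_V A` (each edge counted once). -/
def energyB (G : SimpleGraph V) (hlf : G.LocallyFinite) (A : Finset V) (σ : V → Bool) : ℝ :=
  (1 / 2) * ∑ x ∈ cl G hlf A, ∑ y ∈ (cl G hlf A).filter (fun y => G.Adj x y),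
    spin (σ x) * spin (σ y)

/-- Free-boundary Ising Hamiltonian: `Σ_{(x,y) ∈ E(A)} σ_x σ_y`,
    the sum over edges with both endpoints in `A` (each edge counted once). -/
def energyF (G : SimpleGraph V) (A : Finset V) (σ : V → Bool) : ℝ :=
  (1 / 2) * ∑ x ∈ A, ∑ y ∈ A.filter (fun y => G.Adj x y), spin (σ x) * spin (σ y)

/-- The configuration equal to `p` on `A` and to `η` off `A`. -/
def patch (A : Finset V) (η : V → Bool) (p : ∀ a ∈ A, Bool) : V → Bool :=
  fun v => if h : v ∈ A then p v h else η v

/-- Unnormalised Gibbs sum over configurations agreeing with `η` off `A`,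
    with energy functional `E` (which should already include the factor `β`). -/
def wsum (E : (V → Bool) → ℝ) (A : Finset V) (η : V → Bool) (f : (V → Bool) → ℝ) : ℝ :=
  ∑ p ∈ A.pi (fun _ => (Finset.univ : Finset Bool)),
    Real.exp (E (patch A η p)) * f (patch A η p)

/-- Gibbs expectation of `f` for the measure on region `A` with boundary condition `η`. -/
def gExp (E : (V → Bool) → ℝ) (A : Finset V) (η : V → Bool) (f : (V → Bool) → ℝ) : ℝ :=
  wsum E A η f / wsum E A η (fun _ => 1)

/-- Gibbs probability of an event. -/
def gProb (E : (V → Bool) → ℝ) (A : Finset V) (η : V → Bool) (P : (V → Bool) → Prop) : ℝ :=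
  gExp E A η (fun σ => if P σ then 1 else 0)

/-- Gibbs variance of `f`. -/
def gVar (E : (V → Bool) → ℝ) (A : Finset V) (η : V → Bool) (f : (V → Bool) → ℝ) : ℝ :=
  gExp E A η (fun σ => f σ ^ 2) - gExp E A η f ^ 2

/-- Dirichlet form of the heat-bath Glauber dynamics:
    `D(f) = Σ_{x ∈ A} μ(Var_x(f))`, where `Var_x(f)(σ)` is the variance of `f`
    under the one-site conditional Gibbs measure at `x` given `σ` elsewhere. -/
def dirich (E : (V → Bool) → ℝ) (A : Finset V) (η : V → Bool) (f : (V → Bool) → ℝ) : ℝ :=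
  ∑ x ∈ A, gExp E A η (fun σ => gVar E {x} σ f)

/-- Spectral gap `c_gap(μ) = inf { D(f)/Var(f) : Var(f) ≠ 0 }`. -/
def cgap (E : (V → Bool) → ℝ) (A : Finset V) (η : V → Bool) : ℝ :=
  sInf {r : ℝ | ∃ f : (V → Bool) → ℝ, gVar E A η f ≠ 0 ∧ r = dirich E A η f / gVar E A η f}

/-- The edge boundary of `C`, encoded as ordered pairs `(u,v)` with `u ∈ C`,
    `v ∉ C` and `u ~ v`; these pairs are in bijection with the boundary edges. -/
def obd (G : SimpleGraph V) (hlf : G.LocallyFinite) (C : Finset V) : Finset (V × V) :=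
  (C ×ˢ C.biUnion (fun c => nbr G hlf c)).filter (fun p => G.Adj p.1 p.2 ∧ p.2 ∉ C)

end IsingGlauber

namespace Finset

theorem sum_pow_card_le_of_card_filter_le {α : Type*} {𝒦 : Finset (Finset α)} {b t : ℝ}
    (hb : 0 ≤ b) (ht : 0 ≤ t) (hbt : b * t ≤ 1 / 2) (hne : ∀ C ∈ 𝒦, C.Nonempty)
    (hcount : ∀ k, (#{C ∈ 𝒦 | #C = k} : ℝ) ≤ b ^ k) :
    ∑ C ∈ 𝒦, t ^ #C ≤ 2 * (b * t) := by
  have hmaps : ∀ C ∈ 𝒦, #C ∈ Ico 1 (𝒦.sup card + 1) := fun C hC =>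
    mem_Ico.2 ⟨(hne C hC).card_pos, Nat.lt_succ_of_le (le_sup (f := card) hC)⟩
  rw [← sum_fiberwise_of_maps_to hmaps]
  calc ∑ k ∈ Ico 1 (𝒦.sup card + 1), ∑ C ∈ 𝒦 with #C = k, t ^ #C
      = ∑ k ∈ Ico 1 (𝒦.sup card + 1), (#{C ∈ 𝒦 | #C = k} : ℝ) * t ^ k := by
        refine sum_congr rfl fun k _ => ?_
        rw [sum_congr rfl fun C hC => by rw [(mem_filter.1 hC).2], sum_const, nsmul_eq_mul]
    _ ≤ ∑ k ∈ Ico 1 (𝒦.sup card + 1), (b * t) ^ k := sum_le_sum fun k _ => by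
        rw [mul_pow]; exact mul_le_mul_of_nonneg_right (hcount k) (pow_nonneg ht k)
    _ = (b * t) * ∑ j ∈ range (𝒦.sup card), (b * t) ^ j := by
        rw [sum_Ico_eq_sum_range, Nat.add_sub_cancel, mul_sum]
        exact sum_congr rfl fun j _ => by rw [add_comm, pow_succ']
    _ ≤ (b * t) * ∑ j ∈ range (𝒦.sup card), (1 / 2 : ℝ) ^ j := by
        gcongr
    _ ≤ 2 * (b * t) := by
        rw [mul_comm 2]
        exact mul_le_mul_of_nonneg_left (sum_geometric_two_le _) (by positivity)

theorem sum_le_one_add_sum_mul_of_injOn {ι κ : Type*} {P : Finset ι} {𝒦 : Finset κ}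
    {f w : ι → ℝ} {a : κ → ℝ} {bad : ι → Prop} {Φ : ι → ι} {C : ι → κ}
    (hw : ∀ p ∈ P, 0 ≤ w p) (ha : ∀ K ∈ 𝒦, 0 ≤ a K) (hgood : ∀ p ∈ P, ¬ bad p → f p ≤ w p)
    (hbad : ∀ p ∈ P, bad p → Φ p ∈ P ∧ C p ∈ 𝒦 ∧ f p ≤ w (Φ p) * a (C p))
    (hinj : Set.InjOn (fun p => (Φ p, C p)) {p | p ∈ P ∧ bad p}) :
    ∑ p ∈ P, f p ≤ (1 + ∑ K ∈ 𝒦, a K) * ∑ p ∈ P, w p := by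
  rw [← sum_filter_add_sum_filter_not P bad, add_mul, one_mul, add_comm]
  gcongr
  · calc ∑ p ∈ P with ¬ bad p, f p ≤ ∑ p ∈ P with ¬ bad p, w p :=
          sum_le_sum fun p hp => hgood p (mem_filter.1 hp).1 (mem_filter.1 hp).2
      _ ≤ ∑ p ∈ P, w p := sum_le_sum_of_subset_of_nonneg (filter_subset _ _) fun p hp _ => hw p hp
  · calc ∑ p ∈ P with bad p, f p
        ≤ ∑ p ∈ P with bad p, w (Φ p) * a (C p) :=
          sum_le_sum fun p hp => (hbad p (mem_filter.1 hp).1 (mem_filter.1 hp).2).2.2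
      _ = ∑ q ∈ {p ∈ P | bad p}.image (fun p => (Φ p, C p)), w q.1 * a q.2 :=
          (sum_image (f := fun q => w q.1 * a q.2) fun p hp p' hp' h =>
            hinj (mem_filter.1 hp) (mem_filter.1 hp') h).symm
      _ ≤ ∑ q ∈ P ×ˢ 𝒦, w q.1 * a q.2 := by
          refine sum_le_sum_of_subset_of_nonneg ?_ fun q hq _ => ?_
          · intro q hq
            obtain ⟨p, hp, rfl⟩ := mem_image.1 hq
            obtain ⟨hΦ, hC, -⟩ := hbad p (mem_filter.1 hp).1 (mem_filter.1 hp).2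
            exact mem_product.2 ⟨hΦ, hC⟩
          · exact mul_nonneg (hw _ (mem_product.1 hq).1) (ha _ (mem_product.1 hq).2)
      _ = (∑ p ∈ P, w p) * ∑ K ∈ 𝒦, a K := by rw [sum_product, sum_mul_sum]
      _ = _ := mul_comm _ _

theorem sum_sum_le_zero_of_add_le_zero {α : Type*} (T : Finset α) {f : α → α → ℝ}
    (hf : ∀ u v, f u v + f v u ≤ 0) : ∑ u ∈ T, ∑ v ∈ T, f u v ≤ 0 := by
  have h : 2 * ∑ u ∈ T, ∑ v ∈ T, f u v = ∑ u ∈ T, ∑ v ∈ T, (f u v + f v u) := by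
    simp only [sum_add_distrib]
    rw [sum_comm (f := fun u v => f v u)]
    ring
  have : ∑ u ∈ T, ∑ v ∈ T, (f u v + f v u) ≤ 0 :=
    sum_nonpos fun u _ => sum_nonpos fun v _ => hf u v
  linarith

end Finset

namespace SimpleGraph

variable {V : Type*} [DecidableEq V] {G : SimpleGraph V}

theorem card_finsetWalkLength_le [G.LocallyFinite] {Δ : ℕ} (hΔ : ∀ v, G.degree v ≤ Δ) (n : ℕ)
    (u v : V) : #(G.finsetWalkLength n u v) ≤ Δ ^ n := by
  induction n generalizing u with
  | zero =>
    rw [finsetWalkLength]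
    split_ifs with h
    · subst h; simp
    · simp
  | succ n ih =>
    rw [finsetWalkLength]
    calc _ ≤ ∑ w : G.neighborSet u, #((G.finsetWalkLength n w v).map _) := card_biUnion_le
      _ ≤ ∑ _w : G.neighborSet u, Δ ^ n := sum_le_sum fun w _ => by rw [card_map]; exact ih w
      _ = G.degree u * Δ ^ n := by
        rw [sum_const, card_univ, card_neighborSet_eq_degree, smul_eq_mul]
      _ ≤ Δ ^ (n + 1) := by rw [pow_succ']; exact Nat.mul_le_mul_right _ (hΔ u)

theorem Walk.exists_support_toFinset_eq_insert {u w z y : V} (p : G.Walk u w)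
    (hz : z ∈ p.support) (hzy : G.Adj z y) :
    ∃ q : G.Walk u w, q.length = p.length + 2 ∧
      q.support.toFinset = insert y p.support.toFinset := by
  refine ⟨(p.takeUntil z hz).append (.cons hzy (.cons hzy.symm (p.dropUntil z hz))), ?_, ?_⟩
  · have h := congrArg Walk.length (p.take_spec hz)
    simp only [Walk.length_append, Walk.length_cons] at h ⊢
    omega
  · conv_rhs => rw [← p.take_spec hz]
    ext v
    simp only [List.mem_toFinset, Walk.mem_support_append_iff, Walk.support_cons, List.mem_cons,
      mem_insert]
    have hzt := (p.takeUntil z hz).end_mem_support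
    by_cases hvz : v = z
    · subst hvz; simp [hzt]
    · tauto

def IsConnectedTo (G : SimpleGraph V) (x : V) (C : Finset V) : Prop :=
  ∀ v ∈ C, ∃ p : G.Walk x v, ∀ u ∈ p.support, u ∈ insert x C

theorem IsConnectedTo.exists_adj_notMem {x : V} {C T : Finset V} (hC : G.IsConnectedTo x C)
    (hxT : x ∈ T) (hT : T ⊆ insert x C) (hne : T ≠ insert x C) :
    ∃ z ∈ T, ∃ y ∈ insert x C, y ∉ T ∧ G.Adj z y := by
  obtain ⟨v, hv, hvT⟩ := exists_of_ssubset (ssubset_of_subset_of_ne hT hne)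
  have hvC : v ∈ C := (mem_insert.1 hv).resolve_left fun h => hvT (h ▸ hxT)
  obtain ⟨p, hp⟩ := hC v hvC
  obtain ⟨d, hd, hdT, hdT'⟩ := p.exists_boundary_dart (T : Set V) hxT hvT
  exact ⟨d.fst, hdT, d.snd, hp _ (p.dart_snd_mem_support_of_mem_darts hd), hdT', d.adj⟩

theorem IsConnectedTo.exists_walk_support_toFinset_eq {x : V} {C : Finset V}
    (hC : G.IsConnectedTo x C) (hxC : x ∉ C) :
    ∃ p : G.Walk x x, p.length = 2 * #C ∧ p.support.toFinset = insert x C := by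
  have grow : ∀ k ≤ #C, ∃ p : G.Walk x x, p.length = 2 * k ∧
      p.support.toFinset ⊆ insert x C ∧ #p.support.toFinset = k + 1 := by
    intro k
    induction k with
    | zero => exact fun _ => ⟨.nil, rfl, by simp, by simp⟩
    | succ k ih =>
      intro hk
      obtain ⟨p, hlen, hsub, hcard⟩ := ih (by omega)
      have hne : p.support.toFinset ≠ insert x C := by
        intro h
        rw [h, card_insert_of_notMem hxC] at hcard
        omega
      obtain ⟨z, hz, y, hy, hyp, hzy⟩ :=
        hC.exists_adj_notMem (by simp) hsub hne
      obtain ⟨q, hqlen, hq⟩ := p.exists_support_toFinset_eq_insert (List.mem_toFinset.1 hz) hzy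
      refine ⟨q, by omega, hq ▸ insert_subset hy hsub, ?_⟩
      rw [hq, card_insert_of_notMem hyp, hcard]
  obtain ⟨p, hlen, hsub, hcard⟩ := grow #C le_rfl
  exact ⟨p, hlen, eq_of_subset_of_card_le hsub (by rw [card_insert_of_notMem hxC, hcard])⟩

theorem card_filter_card_eq_le_of_isConnectedTo [G.LocallyFinite] {Δ : ℕ}
    (hΔ : ∀ v, G.degree v ≤ Δ) {x : V} {𝒦 : Finset (Finset V)}
    (h𝒦 : ∀ C ∈ 𝒦, x ∉ C ∧ G.IsConnectedTo x C) (k : ℕ) :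
    #{C ∈ 𝒦 | #C = k} ≤ Δ ^ (2 * k) := by
  have hsub : {C ∈ 𝒦 | #C = k} ⊆
      (G.finsetWalkLength (2 * k) x x).image fun p => p.support.toFinset.erase x := by
    intro C hC
    obtain ⟨hC𝒦, rfl⟩ := mem_filter.1 hC
    obtain ⟨hxC, hconn⟩ := h𝒦 C hC𝒦
    obtain ⟨p, hlen, hp⟩ := hconn.exists_walk_support_toFinset_eq hxC
    exact mem_image.2 ⟨p, mem_finsetWalkLength_iff.2 hlen, by rw [hp, erase_insert hxC]⟩
  exact (card_le_card hsub).trans (card_image_le.trans (card_finsetWalkLength_le hΔ _ x x))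

def cluster (G : SimpleGraph V) (x : V) (A : Finset V) : Finset V :=
  {v ∈ A | ∃ p : G.Walk x v, ∀ u ∈ p.support, u ∈ insert x A}

theorem cluster_subset (x : V) (A : Finset V) : G.cluster x A ⊆ A := filter_subset _ _

theorem mem_cluster_of_adj {x u v : V} {A : Finset V} (hu : u ∈ insert x (G.cluster x A))
    (hv : v ∈ A) (huv : G.Adj u v) : v ∈ G.cluster x A := by
  obtain ⟨p, hp⟩ : ∃ p : G.Walk x u, ∀ w ∈ p.support, w ∈ insert x A := by
    rcases mem_insert.1 hu with rfl | hu
    · exact ⟨.nil, by simp⟩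
    · exact (mem_filter.1 hu).2
  refine mem_filter.2 ⟨hv, p.concat huv, fun w hw => ?_⟩
  rw [Walk.support_concat, List.mem_append, List.mem_singleton] at hw
  rcases hw with hw | rfl
  · exact hp w hw
  · exact mem_insert_of_mem hv

theorem isConnectedTo_cluster (x : V) (A : Finset V) : G.IsConnectedTo x (G.cluster x A) := by
  intro v hv
  obtain ⟨p, hp⟩ := (mem_filter.1 hv).2
  refine ⟨p, fun u hu => ?_⟩
  rcases mem_insert.1 (hp u hu) with rfl | huA
  · exact mem_insert_self _ _
  · exact mem_insert_of_mem <| mem_filter.2 ⟨huA, p.takeUntil u hu,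
      fun w hw => hp w (p.support_takeUntil_subset_support hu hw)⟩

end SimpleGraph

namespace IsingGlauber

variable {V : Type*}

theorem spin_not (b : Bool) : spin (!b) = -spin b := by cases b <;> simp [spin]

theorem neg_one_le_spin (b : Bool) : -1 ≤ spin b := by cases b <;> norm_num [spin]

theorem spin_le_one (b : Bool) : spin b ≤ 1 := by cases b <;> norm_num [spin]

def levelSign (G : SimpleGraph V) (o u v : V) : ℝ :=
  if G.dist o v = G.dist o u + 1 then 1 else -1

variable {G : SimpleGraph V} {hlf : G.LocallyFinite}

theorem mem_nbr {u v : V} : v ∈ nbr G hlf u ↔ G.Adj u v := by simp [nbr]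

theorem sum_sum_filter_adj_comm (T : Finset V) (f : V → V → ℝ) :
    ∑ u ∈ T, ∑ v ∈ T with G.Adj u v, f v u = ∑ u ∈ T, ∑ v ∈ T with G.Adj u v, f u v := by
  simp only [sum_filter]
  rw [sum_comm]
  exact sum_congr rfl fun u _ => sum_congr rfl fun v _ => by rw [G.adj_comm]

variable {g : ℕ} {o : V}

theorem levelSign_add_levelSign_le_zero (u v : V) : levelSign G o u v + levelSign G o v u ≤ 0 := by
  unfold levelSign
  split_ifs <;> first | omega | norm_num

theorem le_sum_nbr_levelSign (hconn : G.Connected) (hgrow : IsGrowing G hlf g o) (u : V) :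
    (g : ℝ) ≤ ∑ v ∈ nbr G hlf u, levelSign G o u v := by
  have hdown : {v ∈ nbr G hlf u | ¬ G.dist o v = G.dist o u + 1} =
      {v ∈ nbr G hlf u | G.dist o v ≤ G.dist o u} := by
    refine filter_congr fun v hv => ?_
    have htri : G.dist o v ≤ G.dist o u + G.dist u v := hconn.dist_triangle
    rw [SimpleGraph.dist_eq_one_iff_adj.2 (mem_nbr.1 hv)] at htri
    omega
  have hcount : (#{v ∈ nbr G hlf u | G.dist o v ≤ G.dist o u} + g : ℝ) ≤
      #{v ∈ nbr G hlf u | G.dist o v = G.dist o u + 1} := by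
    exact_mod_cast hgrow u
  rw [show ∑ v ∈ nbr G hlf u, levelSign G o u v = _ from sum_ite _ _, sum_const, sum_const, hdown]
  simp only [nsmul_eq_mul, mul_one, mul_neg]
  linarith

variable [DecidableEq V]

def flipSet (C : Finset V) (σ : V → Bool) : V → Bool := fun v => if v ∈ C then !σ v else σ v

theorem flipSet_flipSet (C : Finset V) (σ : V → Bool) : flipSet C (flipSet C σ) = σ := by
  funext v
  by_cases h : v ∈ C <;> simp [flipSet, h]

theorem subset_cl (A : Finset V) : A ⊆ cl G hlf A := subset_union_left

theorem filter_adj_cl_eq_nbr {A : Finset V} {u : V} (hu : u ∈ A) :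
    {v ∈ cl G hlf A | G.Adj u v} = nbr G hlf u := by
  ext v
  simp only [mem_filter, mem_nbr, cl, vbd, mem_union, mem_sdiff, mem_biUnion]
  exact ⟨And.right, fun h => ⟨(em (v ∈ A)).imp_right fun hv => ⟨⟨u, hu, h⟩, hv⟩, h⟩⟩

theorem energyB_flipSet (A C : Finset V) (σ : V → Bool) :
    energyB G hlf A (flipSet C σ) = energyB G hlf A σ -
      2 * ∑ u ∈ cl G hlf A ∩ C, ∑ v ∈ {v ∈ cl G hlf A | G.Adj u v} \ C,
        spin (σ u) * spin (σ v) := by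
  set T := cl G hlf A
  set c : V → V → ℝ := fun u v => if u ∈ C ∧ v ∉ C then spin (σ u) * spin (σ v) else 0
  have hflip : ∀ u v, spin (flipSet C σ u) * spin (flipSet C σ v) =
      spin (σ u) * spin (σ v) - 2 * (c u v + c v u) := by
    intro u v
    by_cases hu : u ∈ C <;> by_cases hv : v ∈ C <;> simp [c, flipSet, hu, hv, spin_not] <;> ring
  have hc : ∑ u ∈ T, ∑ v ∈ T with G.Adj u v, c u v =
      ∑ u ∈ T ∩ C, ∑ v ∈ {v ∈ T | G.Adj u v} \ C, spin (σ u) * spin (σ v) := by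
    rw [← filter_mem_eq_inter, sum_filter]
    refine sum_congr rfl fun u _ => ?_
    split_ifs with hu
    · rw [sdiff_eq_filter, sum_filter (p := fun v => v ∉ C)]
      exact sum_congr rfl fun v _ => by simp [c, hu]
    · exact sum_eq_zero fun v _ => by simp [c, hu]
  have hsum : ∑ u ∈ T, ∑ v ∈ T with G.Adj u v, spin (flipSet C σ u) * spin (flipSet C σ v) =
      ∑ u ∈ T, ∑ v ∈ T with G.Adj u v, spin (σ u) * spin (σ v) -
        4 * ∑ u ∈ T, ∑ v ∈ T with G.Adj u v, c u v := by
    simp only [hflip, sum_sub_distrib, ← mul_sum, sum_add_distrib, sum_sum_filter_adj_comm T c]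
    ring
  unfold energyB
  rw [hsum, hc]
  ring

theorem le_sum_spin_nbr_sdiff (hconn : G.Connected) (hgrow : IsGrowing G hlf g o)
    {C : Finset V} {x u : V} {σ : V → Bool} (hxC : x ∉ C) (hσx : σ x = true)
    (hxd : G.Adj u x → G.dist o x ≤ G.dist o u)
    (hup : ∀ v ∉ C, G.Adj u v → G.dist o v = G.dist o u + 1 → σ v = true) :
    (g : ℝ) - ∑ v ∈ C, (if G.Adj u v then levelSign G o u v else 0) +
        (if G.Adj u x then 2 else 0) ≤ ∑ v ∈ nbr G hlf u \ C, spin (σ v) := by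
  have hsplit : ∑ v ∈ nbr G hlf u, levelSign G o u v =
      ∑ v ∈ C, (if G.Adj u v then levelSign G o u v else 0) +
        ∑ v ∈ nbr G hlf u \ C, levelSign G o u v := by
    rw [← sum_filter_add_sum_filter_not (nbr G hlf u) (· ∈ C), sdiff_eq_filter, ← sum_filter]
    exact congrArg₂ _ (sum_congr (ext fun v => by simp [mem_nbr, and_comm]) fun _ _ => rfl) rfl
  have hpt : ∀ v ∈ nbr G hlf u \ C,
      levelSign G o u v + (if v = x then 2 else 0) ≤ spin (σ v) := by
    intro v hv
    obtain ⟨hvN, hvC⟩ := mem_sdiff.1 hv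
    unfold levelSign
    split_ifs with hvup hvx hvx
    · subst hvx
      have := hxd (mem_nbr.1 hvN)
      omega
    · rw [hup v hvC (mem_nbr.1 hvN) hvup]; norm_num [spin]
    · rw [hvx, hσx]; norm_num [spin]
    · linarith [neg_one_le_spin (σ v)]
  have hx : ∑ v ∈ nbr G hlf u \ C, (if v = x then (2 : ℝ) else 0) =
      if G.Adj u x then 2 else 0 := by
    simp [sum_ite_eq', mem_nbr, hxC]
  calc (g : ℝ) - ∑ v ∈ C, (if G.Adj u v then levelSign G o u v else 0) +
          (if G.Adj u x then 2 else 0)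
      ≤ ∑ v ∈ nbr G hlf u \ C, (levelSign G o u v + if v = x then 2 else 0) := by
        rw [sum_add_distrib, hx]
        linarith [le_sum_nbr_levelSign hconn hgrow u]
    _ ≤ _ := sum_le_sum hpt

theorem card_mul_add_le_sum_sum_spin (hconn : G.Connected) (hgrow : IsGrowing G hlf g o)
    {C : Finset V} {x : V} {σ : V → Bool} (hxC : x ∉ C) (hσx : σ x = true)
    (hxd : ∀ u ∈ C, G.Adj u x → G.dist o x ≤ G.dist o u)
    (hup : ∀ u ∈ C, ∀ v ∉ C, G.Adj u v → G.dist o v = G.dist o u + 1 → σ v = true) :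
    (g * #C + 2 * #{u ∈ C | G.Adj u x} : ℝ) ≤ ∑ u ∈ C, ∑ v ∈ nbr G hlf u \ C, spin (σ v) := by
  -- an edge inside `C` goes up one level from at most one of its endpoints
  have hinner : ∑ u ∈ C, ∑ v ∈ C, (if G.Adj u v then levelSign G o u v else 0) ≤ 0 := by
    refine sum_sum_le_zero_of_add_le_zero C fun u v => ?_
    rw [G.adj_comm v u]
    split_ifs
    · exact levelSign_add_levelSign_le_zero u v
    · norm_num
  calc (g * #C + 2 * #{u ∈ C | G.Adj u x} : ℝ)
      ≤ ∑ u ∈ C, ((g : ℝ) - ∑ v ∈ C, (if G.Adj u v then levelSign G o u v else 0) +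
          (if G.Adj u x then 2 else 0)) := by
        rw [sum_add_distrib, sum_sub_distrib, ← sum_filter]
        simp only [sum_const, nsmul_eq_mul]
        linarith
    _ ≤ _ := sum_le_sum fun u hu =>
        le_sum_spin_nbr_sdiff hconn hgrow hxC hσx (hxd u hu) (hup u hu)

def configs (A : Finset V) (η : V → Bool) : Finset (V → Bool) :=
  (A.pi fun _ => univ).image (patch A η)

theorem mem_configs {A : Finset V} {η σ : V → Bool} :
    σ ∈ configs A η ↔ ∀ v ∉ A, σ v = η v := by
  constructor
  · intro hσ v hv
    obtain ⟨p, -, rfl⟩ := mem_image.1 hσ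
    simp [patch, hv]
  · intro h
    refine mem_image.2 ⟨fun v _ => σ v, mem_pi.2 fun _ _ => mem_univ _, funext fun v => ?_⟩
    by_cases hv : v ∈ A
    · simp [patch, hv]
    · simp [patch, hv, h v hv]

theorem wsum_eq_sum_configs (E : (V → Bool) → ℝ) (A : Finset V) (η : V → Bool)
    (f : (V → Bool) → ℝ) : wsum E A η f = ∑ σ ∈ configs A η, Real.exp (E σ) * f σ := by
  rw [configs, sum_image fun p _ q _ h => funext fun v => funext fun hv => by
    simpa [patch, hv] using congrFun h v]
  rfl

theorem wsum_one_pos (E : (V → Bool) → ℝ) (A : Finset V) (η : V → Bool) :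
    0 < wsum E A η (fun _ => 1) :=
  sum_pos (fun _ _ => by simp [Real.exp_pos])
    ⟨fun _ _ => true, mem_pi.2 fun _ _ => mem_univ _⟩

theorem piecewise_mem_configs (A : Finset V) (σ η : V → Bool) : A.piecewise σ η ∈ configs A η :=
  mem_configs.2 fun _ hv => piecewise_eq_of_notMem _ _ _ hv

theorem flipSet_mem_configs {A C : Finset V} (hCA : C ⊆ A) {η σ : V → Bool}
    (hσ : σ ∈ configs A η) : flipSet C σ ∈ configs A η :=
  mem_configs.2 fun v hv => by simp [flipSet, mt (@hCA v) hv, mem_configs.1 hσ v hv]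

theorem gProb_cylinder (E : (V → Bool) → ℝ) (A : Finset V) (η σ : V → Bool) :
    gProb E A η (fun σ' => ∀ v ∈ A, σ' v = σ v) =
      Real.exp (E (A.piecewise σ η)) / wsum E A η (fun _ => 1) := by
  unfold gProb gExp
  congr 1
  rw [wsum_eq_sum_configs, sum_eq_single_of_mem _ (piecewise_mem_configs A σ η)]
  · rw [if_pos fun v hv => piecewise_eq_of_mem _ _ _ hv, mul_one]
  · intro σ' hσ' hne
    rw [if_neg, mul_zero]
    refine fun hA => hne (funext fun v => ?_)
    by_cases hv : v ∈ A
    · simp [hv, hA v hv]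
    · simp [hv, mem_configs.1 hσ' v hv]

theorem piecewise_flipSet {A C : Finset V} (hAC : Disjoint A C) (σ η : V → Bool) :
    A.piecewise σ (flipSet C η) = flipSet C (A.piecewise σ η) := by
  funext v
  by_cases hv : v ∈ A
  · simp [flipSet, hv, disjoint_left.1 hAC hv]
  · simp [flipSet, hv]

theorem wsum_flipSet (A C : Finset V) (E : (V → Bool) → ℝ) (η : V → Bool) :
    wsum E A (flipSet C η) (fun _ => 1) =
      ∑ σ ∈ configs A η, Real.exp (E (flipSet C σ)) := by
  rw [wsum_eq_sum_configs]
  refine sum_nbij' (flipSet C) (flipSet C) (fun σ hσ => ?_) (fun σ hσ => ?_)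
    (fun σ _ => flipSet_flipSet C σ) (fun σ _ => flipSet_flipSet C σ)
    (fun σ _ => by rw [mul_one, flipSet_flipSet])
  · refine mem_configs.2 fun v hv => ?_
    have := mem_configs.1 hσ v hv
    by_cases hvC : v ∈ C <;> simp_all [flipSet]
  · refine mem_configs.2 fun v hv => ?_
    simp [flipSet, mem_configs.1 hσ v hv]

theorem gProb_div_gProb_flipSet_le {E : (V → Bool) → ℝ} {A C : Finset V} (hAC : Disjoint A C)
    {η σ : V → Bool} {h : (V → Bool) → ℝ}
    (hE : ∀ σ' ∈ configs A η, E (A.piecewise σ η) + E (flipSet C σ') ≤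
      E (flipSet C (A.piecewise σ η)) + E σ' + h σ') :
    gProb E A η (fun σ' => ∀ v ∈ A, σ' v = σ v) /
        gProb E A (flipSet C η) (fun σ' => ∀ v ∈ A, σ' v = σ v) ≤
      gExp E A η (fun σ' => Real.exp (h σ')) := by
  set a := E (A.piecewise σ η)
  set a' := E (flipSet C (A.piecewise σ η))
  have hZ := wsum_one_pos E A η
  have hZ' := wsum_one_pos E A (flipSet C η)
  have key : Real.exp a * wsum E A (flipSet C η) (fun _ => 1) ≤
      Real.exp a' * wsum E A η (fun σ' => Real.exp (h σ')) := by
    rw [wsum_flipSet, wsum_eq_sum_configs, mul_sum, mul_sum]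
    refine sum_le_sum fun σ' hσ' => ?_
    rw [← Real.exp_add, ← Real.exp_add, ← Real.exp_add]
    exact Real.exp_le_exp.2 (by linarith [hE σ' hσ'])
  rw [gProb_cylinder, gProb_cylinder, piecewise_flipSet hAC, gExp,
    div_div_div_eq, div_le_div_iff₀ (by positivity) hZ]
  calc Real.exp a * wsum E A (flipSet C η) (fun _ => 1) * wsum E A η (fun _ => 1)
      ≤ Real.exp a' * wsum E A η (fun σ' => Real.exp (h σ')) * wsum E A η (fun _ => 1) :=
        mul_le_mul_of_nonneg_right key hZ.le
    _ = _ := by ring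

def minusNbrs (G : SimpleGraph V) (F : Finset V) (x : V) (σ : V → Bool) : Finset V :=
  {v ∈ F | G.Adj x v ∧ σ v = false}

theorem sum_spin_sub_sum_spin_le {F : Finset V} {σ₀ σ : V → Bool}
    (hagree : ∀ v ∉ F, σ₀ v = σ v) (D : Finset V) :
    ∑ v ∈ D, spin (σ₀ v) - ∑ v ∈ D, spin (σ v) ≤ 2 * #{v ∈ D | v ∈ F ∧ σ v = false} := by
  rw [← sum_sub_distrib, mul_comm, ← nsmul_eq_mul, ← sum_const, sum_filter]
  refine sum_le_sum fun v _ => ?_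
  split_ifs with h
  · rw [h.2]
    linarith [spin_le_one (σ₀ v), show spin false = -1 from rfl]
  · by_cases hvF : v ∈ F
    · rw [show σ v = true by simpa [hvF] using h]
      linarith [spin_le_one (σ₀ v), show spin true = 1 from rfl]
    · rw [hagree v hvF, sub_self]

theorem energyB_add_energyB_flipSet_le {F : Finset V} {x : V} {σ₀ σ : V → Bool}
    (hσ₀x : σ₀ x = true) (hσx : σ x = true) (hagree : ∀ v ∉ F, σ₀ v = σ v) :
    energyB G hlf F σ₀ + energyB G hlf F (flipSet {x} σ) ≤
      energyB G hlf F (flipSet {x} σ₀) + energyB G hlf F σ + 4 * #(minusNbrs G F x σ) := by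
  set M : ℝ := (#(minusNbrs G F x σ) : ℝ)
  have hnbrs : ∀ u ∈ cl G hlf F ∩ {x},
      ∑ v ∈ {v ∈ cl G hlf F | G.Adj u v} \ {x}, spin (σ₀ u) * spin (σ₀ v) -
        ∑ v ∈ {v ∈ cl G hlf F | G.Adj u v} \ {x}, spin (σ u) * spin (σ v) ≤ 2 * M := by
    intro u hu
    obtain rfl := mem_singleton.1 (mem_inter.1 hu).2
    simp only [hσ₀x, hσx, show spin true = 1 from rfl, one_mul]
    refine (sum_spin_sub_sum_spin_le hagree _).trans (mul_le_mul_of_nonneg_left ?_ zero_le_two)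
    refine Nat.cast_le.2 (card_le_card fun v hv => ?_)
    simp only [mem_filter, mem_sdiff] at hv
    exact mem_filter.2 ⟨hv.2.1, hv.1.1.2, hv.2.2⟩
  have hsum := sum_le_sum hnbrs
  rw [sum_const, nsmul_eq_mul, sum_sub_distrib] at hsum
  have hcard : (#(cl G hlf F ∩ {x}) : ℝ) ≤ 1 := by
    exact_mod_cast (card_le_card inter_subset_right).trans (card_singleton x).le
  have hM : 0 ≤ M := by positivity
  rw [energyB_flipSet, energyB_flipSet]
  nlinarith

def minusCluster (G : SimpleGraph V) (F : Finset V) (x : V) (σ : V → Bool) : Finset V :=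
  G.cluster x {v ∈ F | σ v = false}

theorem minusCluster_subset (F : Finset V) (x : V) (σ : V → Bool) : minusCluster G F x σ ⊆ F :=
  (G.cluster_subset _ _).trans (filter_subset _ _)

theorem minusNbrs_subset_minusCluster (F : Finset V) (x : V) (σ : V → Bool) :
    minusNbrs G F x σ ⊆ minusCluster G F x σ := fun v hv => by
  obtain ⟨hvF, hxv, hσv⟩ := mem_filter.1 hv
  exact G.mem_cluster_of_adj (mem_insert_self _ _) (mem_filter.2 ⟨hvF, hσv⟩) hxv

theorem energyB_add_le_energyB_flipSet_minusCluster (hconn : G.Connected)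
    (hgrow : IsGrowing G hlf g o) {F : Finset V} {x : V} {η σ : V → Bool} (hxF : x ∉ F)
    (hηx : η x = true) (hxd : ∀ u ∈ F, G.Adj u x → G.dist o x ≤ G.dist o u)
    (hup : ∀ u ∈ F, ∀ v ∉ F, G.Adj u v → G.dist o v = G.dist o u + 1 → η v = true)
    (hσ : σ ∈ configs F η) :
    energyB G hlf F σ + 2 * g * #(minusCluster G F x σ) + 4 * #(minusNbrs G F x σ) ≤
      energyB G hlf F (flipSet (minusCluster G F x σ) σ) := by
  set C := minusCluster G F x σ
  have hCF : C ⊆ F := minusCluster_subset F x σ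
  have hCminus : ∀ u ∈ C, σ u = false := fun u hu => (mem_filter.1 (G.cluster_subset _ _ hu)).2
  have hCup : ∀ u ∈ C, ∀ v ∉ C, G.Adj u v → G.dist o v = G.dist o u + 1 → σ v = true := by
    intro u hu v hvC huv hd
    by_cases hvF : v ∈ F
    · by_contra hσv
      exact hvC (G.mem_cluster_of_adj (mem_insert_of_mem hu)
        (mem_filter.2 ⟨hvF, Bool.eq_false_iff.2 hσv⟩) huv)
    · rw [mem_configs.1 hσ v hvF]
      exact hup u (hCF hu) v hvF huv hd
  have hgain := card_mul_add_le_sum_sum_spin hconn hgrow (fun h => hxF (hCF h))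
    ((mem_configs.1 hσ x hxF).trans hηx) (fun u hu => hxd u (hCF hu)) hCup
  have hM : (#(minusNbrs G F x σ) : ℝ) ≤ #{u ∈ C | G.Adj u x} := by
    exact_mod_cast card_le_card fun v hv =>
      mem_filter.2 ⟨minusNbrs_subset_minusCluster F x σ hv, (mem_filter.1 hv).2.1.symm⟩
  have hflip : energyB G hlf F (flipSet C σ) =
      energyB G hlf F σ + 2 * ∑ u ∈ C, ∑ v ∈ nbr G hlf u \ C, spin (σ v) := by
    rw [energyB_flipSet, inter_eq_right.2 (hCF.trans (subset_cl F)), sub_eq_add_neg,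
      ← mul_neg, ← sum_neg_distrib]
    congr 2
    refine sum_congr rfl fun u hu => ?_
    rw [filter_adj_cl_eq_nbr (hCF hu), hCminus u hu, ← sum_neg_distrib]
    simp only [show spin false = -1 from rfl, neg_one_mul, neg_neg]
  rw [hflip]
  linarith

theorem sum_pow_card_isConnectedTo_le {Δ : ℕ} (hΔ : ∀ v, #(nbr G hlf v) ≤ Δ) {F : Finset V}
    {x : V} (hxF : x ∉ F) {t : ℝ} (ht : 0 ≤ t) (hΔt : (Δ : ℝ) ^ 2 * t ≤ 1 / 2) :
    ∑ C ∈ F.powerset with C.Nonempty ∧ G.IsConnectedTo x C, t ^ #C ≤ 2 * ((Δ : ℝ) ^ 2 * t) := by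
  let _ : G.LocallyFinite := hlf
  refine sum_pow_card_le_of_card_filter_le (by positivity) ht hΔt
    (fun C hC => (mem_filter.1 hC).2.1) fun k => ?_
  have := G.card_filter_card_eq_le_of_isConnectedTo hΔ
    (𝒦 := F.powerset.filter fun C => C.Nonempty ∧ G.IsConnectedTo x C) (fun C hC =>
    ⟨fun h => hxF (mem_powerset.1 (mem_filter.1 hC).1 h), (mem_filter.1 hC).2.2⟩) k
  rw [pow_mul] at this
  exact_mod_cast this

theorem sq_mul_exp_neg_le_half {Δ : ℕ} (hg : 1 ≤ g) {β : ℝ} (hβ : (Δ : ℝ) ^ 2 + 1 ≤ β) :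
    (Δ : ℝ) ^ 2 * Real.exp (-(2 * g * β)) ≤ 1 / 2 := by
  have hg' : (1 : ℝ) ≤ g := by exact_mod_cast hg
  have hexp := Real.add_one_le_exp (2 * g * β)
  rw [Real.exp_neg, ← div_eq_mul_inv, div_le_iff₀ (Real.exp_pos _)]
  nlinarith

theorem gExp_exp_card_minusNbrs_le (hconn : G.Connected) (hgrow : IsGrowing G hlf g o)
    (hg : 1 ≤ g) {Δ : ℕ} (hΔ : ∀ v, #(nbr G hlf v) ≤ Δ) {F : Finset V} {x : V} {η : V → Bool}
    (hxF : x ∉ F) (hηx : η x = true) (hxd : ∀ u ∈ F, G.Adj u x → G.dist o x ≤ G.dist o u)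
    (hup : ∀ u ∈ F, ∀ v ∉ F, G.Adj u v → G.dist o v = G.dist o u + 1 → η v = true)
    {β : ℝ} (hβ : (Δ : ℝ) ^ 2 + 1 ≤ β) :
    gExp (fun σ => β * energyB G hlf F σ) F η
        (fun σ => Real.exp (4 * β * #(minusNbrs G F x σ))) ≤
      1 + 2 * Δ ^ 2 * Real.exp (-(2 * g * β)) := by
  have hβ0 : 0 ≤ β := by nlinarith
  set t := Real.exp (-(2 * g * β))
  set C := minusCluster G F x
  set w : (V → Bool) → ℝ := fun σ => Real.exp (β * energyB G hlf F σ)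
  set M : (V → Bool) → ℝ := fun σ => #(minusNbrs G F x σ)
  have hgood : ∀ σ ∈ configs F η, ¬ (C σ).Nonempty → w σ * Real.exp (4 * β * M σ) ≤ w σ :=
    fun σ _ hσ => by
      have : minusNbrs G F x σ = ∅ := subset_empty.1 <|
        (minusNbrs_subset_minusCluster F x σ).trans (not_nonempty_iff_eq_empty.1 hσ).le
      simp [M, this]
  have hbad : ∀ σ ∈ configs F η, (C σ).Nonempty →
      flipSet (C σ) σ ∈ configs F η ∧
        C σ ∈ F.powerset.filter (fun C => C.Nonempty ∧ G.IsConnectedTo x C) ∧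
        w σ * Real.exp (4 * β * M σ) ≤ w (flipSet (C σ) σ) * t ^ #(C σ) := by
    intro σ hσ hne
    have hgain := energyB_add_le_energyB_flipSet_minusCluster hconn hgrow hxF hηx hxd hup hσ
    refine ⟨flipSet_mem_configs (minusCluster_subset F x σ) hσ,
      mem_filter.2 ⟨mem_powerset.2 (minusCluster_subset F x σ), hne, G.isConnectedTo_cluster _ _⟩,
      ?_⟩
    simp only [w, M, t, ← Real.exp_nat_mul, ← Real.exp_add]
    exact Real.exp_le_exp.2 (by nlinarith)
  have hinj : Set.InjOn (fun σ => (flipSet (C σ) σ, C σ)) {σ | σ ∈ configs F η ∧ (C σ).Nonempty} :=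
    fun σ₁ _ σ₂ _ h => by
      obtain ⟨hΦ, hC⟩ := Prod.mk.inj h
      rw [← flipSet_flipSet (C σ₁) σ₁, hΦ, hC, flipSet_flipSet]
  have hpeierls := sum_le_one_add_sum_mul_of_injOn (w := w) (a := fun K => t ^ #K)
    (fun _ _ => (Real.exp_pos _).le) (fun _ _ => by positivity) hgood hbad hinj
  have hclusters := sum_pow_card_isConnectedTo_le hΔ hxF (Real.exp_pos _).le
    (sq_mul_exp_neg_le_half hg hβ)
  rw [gExp, div_le_iff₀ (wsum_one_pos _ _ _), wsum_eq_sum_configs, wsum_eq_sum_configs]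
  simp only [mul_one]
  refine hpeierls.trans (mul_le_mul_of_nonneg_right ?_ (sum_nonneg fun _ _ => (Real.exp_pos _).le))
  linarith

theorem gProb_div_gProb_flipSet_singleton_le {F : Finset V} {x : V} (hxF : x ∉ F)
    {η : V → Bool} (hηx : η x = true) {β : ℝ} (hβ : 0 ≤ β) (σ : V → Bool) :
    gProb (fun σ' => β * energyB G hlf F σ') F η (fun σ' => ∀ v ∈ F, σ' v = σ v) /
        gProb (fun σ' => β * energyB G hlf F σ') F (flipSet {x} η)
          (fun σ' => ∀ v ∈ F, σ' v = σ v) ≤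
      gExp (fun σ' => β * energyB G hlf F σ') F η
        (fun σ' => Real.exp (4 * β * #(minusNbrs G F x σ'))) := by
  refine gProb_div_gProb_flipSet_le (disjoint_singleton_right.2 hxF) fun σ' hσ' => ?_
  have hσ'x : σ' x = true := (mem_configs.1 hσ' x hxF).trans hηx
  have hpair := energyB_add_energyB_flipSet_le (G := G) (hlf := hlf) (F := F)
    (σ₀ := F.piecewise σ η) (σ := σ') (by simp [hxF, hηx]) hσ'x
    fun v hv =>
      (mem_configs.1 (piecewise_mem_configs F σ η) v hv).trans (mem_configs.1 hσ' v hv).symm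
  nlinarith

end IsingGlauber

open IsingGlauber

theorem statement14_general {V : Type*} [DecidableEq V]
    (G : SimpleGraph V) (hlf : G.LocallyFinite) (hconn : G.Connected)
    (g Δ : ℕ) (hg : 1 ≤ g) (o : V)
    (hgrow : IsGrowing G hlf g o)
    (hΔ : ∀ v : V, (nbr G hlf v).card ≤ Δ)
    (δ : ℝ) (hδ : δ = 1 + Real.log ((Δ : ℝ) + 1)) :
    ∃ β₀ c : ℝ, 0 < β₀ ∧ 0 < c ∧
      ∀ β : ℝ, β₀ ≤ β →
      ∀ (m : ℕ) (Bm : Finset V), (∀ v : V, v ∈ Bm ↔ G.dist o v ≤ m) →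
      ∀ i : ℕ, i ≤ m →
      ∀ x : V, G.dist o x = i →
      ∀ F1 : Finset V, F1 = Bm.filter (fun v => i + 1 ≤ G.dist o v) →
      ∀ τ : V → Bool, (∀ v : V, G.dist o v = m + 1 → τ v = true) →
      ∀ σ : V → Bool,
        gProb (fun σ' => β * energyB G hlf F1 σ') F1 (Function.update τ x true)
            (fun σ' => ∀ v ∈ F1, σ' v = σ v) /
          gProb (fun σ' => β * energyB G hlf F1 σ') F1 (Function.update τ x false)
            (fun σ' => ∀ v ∈ F1, σ' v = σ v) ≤
          1 + c * Real.exp (-(2 * (g : ℝ) * β - δ)) := by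
  refine ⟨(Δ : ℝ) ^ 2 + 1, 2 * (Δ : ℝ) ^ 2 + 1, by positivity, by positivity, ?_⟩
  rintro β hβ m Bm hBm i - x hx F1 hF1 τ hτ σ
  have hmem : ∀ v, v ∈ F1 ↔ G.dist o v ≤ m ∧ i + 1 ≤ G.dist o v := fun v => by
    rw [hF1, mem_filter, hBm]
  have hxF : x ∉ F1 := by simp [hmem, hx]
  have hxd : ∀ u ∈ F1, G.Adj u x → G.dist o x ≤ G.dist o u := fun u hu _ => by
    have := (hmem u).1 hu
    omega
  have hup : ∀ u ∈ F1, ∀ v ∉ F1, G.Adj u v → G.dist o v = G.dist o u + 1 →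
      Function.update τ x true v = true := by
    intro u hu v hv _ hd
    have hu' := (hmem u).1 hu
    have hvm : G.dist o v = m + 1 := by
      by_contra
      exact hv ((hmem v).2 (by omega))
    rw [Function.update_of_ne (by rintro rfl; omega)]
    exact hτ v hvm
  have hflip : Function.update τ x false = flipSet {x} (Function.update τ x true) := by
    funext v
    by_cases hv : v = x <;> simp [flipSet, hv]
  have hδ0 : 0 ≤ δ := hδ ▸ add_nonneg zero_le_one (Real.log_nonneg (by simp))
  rw [hflip]
  calc _ ≤ _ := gProb_div_gProb_flipSet_singleton_le hxF (by simp) (by nlinarith) σ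
    _ ≤ 1 + 2 * Δ ^ 2 * Real.exp (-(2 * g * β)) :=
        gExp_exp_card_minusNbrs_le hconn hgrow hg hΔ hxF (by simp) hxd hup hβ
    _ ≤ _ := by gcongr <;> linarith

/-- bound (4.17) on `‖h_x‖_∞` in the paper: for `β` large, the ratio
of the probabilities that the Gibbs measure on `F_{i+1}` with boundary condition
`τ^{x,+}`, resp. `τ^{x,-}`, produces a given configuration `σ` on `F_{i+1}` is at
most `1 + c e^{-β'}`, with `β' = 2gβ - δ`, `δ = 1 + log(Δ+1)`. -/
theorem statement14 {V : Type*} [DecidableEq V] [Infinite V]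
    (G : SimpleGraph V) (hlf : G.LocallyFinite) (hconn : G.Connected)
    (g Δ : ℕ) (hg : 1 ≤ g) (o : V)
    (hgrow : IsGrowing G hlf g o)
    (hΔ : ∀ v : V, (nbr G hlf v).card ≤ Δ)
    (δ : ℝ) (hδ : δ = 1 + Real.log ((Δ : ℝ) + 1)) :
    ∃ β₀ c : ℝ, 0 < β₀ ∧ 0 < c ∧
      ∀ β : ℝ, β₀ ≤ β →
      ∀ (m : ℕ) (Bm : Finset V), (∀ v : V, v ∈ Bm ↔ G.dist o v ≤ m) →
      ∀ i : ℕ, i ≤ m →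
      ∀ x : V, G.dist o x = i →
      ∀ F1 : Finset V, F1 = Bm.filter (fun v => i + 1 ≤ G.dist o v) →
      ∀ τ : V → Bool, (∀ v : V, G.dist o v = m + 1 → τ v = true) →
      ∀ σ : V → Bool,
        gProb (fun σ' => β * energyB G hlf F1 σ') F1 (Function.update τ x true)
            (fun σ' => ∀ v ∈ F1, σ' v = σ v) /
          gProb (fun σ' => β * energyB G hlf F1 σ') F1 (Function.update τ x false)
            (fun σ' => ∀ v ∈ F1, σ' v = σ v) ≤
          1 + c * Real.exp (-(2 * (g : ℝ) * β - δ)) :=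
  statement14_general G hlf hconn g Δ hg o hgrow hΔ δ hδ
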